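/- The inequality k^N ≤ C(Nk−N−1, N) between the N-th power of k and the binomial coefficient 'Nk−N−1 choose N' holds in each of the following cases: (1) k ≥ 5 and N ≥ 3; (2) k ≥ 4 and N ≥ 4; (3) k ≥ 3 and N ≥ 9. -/

import Mathlib

open MvPolynomial

noncomputable section

open Classical in
def localizedContraction {R : Type*} [CommRing R] (p J : Ideal R) : Ideal R :=
  if h : p.IsPrime then
    letI := h
    (J.map (algebraMap R (Localization.AtPrime p))).comap
      (algebraMap R (Localization.AtPrime p))
  else ⊤

def symbolicPower {R : Type*} [CommRing R] (I : Ideal R) (m : ℕ) : Ideal R :=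
  ⨅ p ∈ associatedPrimes R (R ⧸ I), localizedContraction p (I ^ m)

def idealHeight {R : Type*} [CommRing R] (p : Ideal R) : ℕ∞ :=
  Set.chainHeight {q : Ideal R | q.IsPrime ∧ q < p} (· < ·)

def bigHeight {R : Type*} [CommRing R] (I : Ideal R) : ℕ∞ :=
  ⨆ p ∈ associatedPrimes R (R ⧸ I), idealHeight p

def IsHomogeneousIdeal {K : Type*} [CommRing K] {σ : Type*} (I : Ideal (MvPolynomial σ K)) : Prop :=
  ∀ f ∈ I, ∀ d : ℕ, homogeneousComponent d f ∈ I

def alphaDeg {K : Type*} [CommRing K] {σ : Type*} (I : Ideal (MvPolynomial σ K)) : ℕ :=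
  sInf {d : ℕ | ∃ f ∈ I, f ≠ 0 ∧ f.IsHomogeneous d}

def irrelevant (K : Type*) [CommRing K] (σ : Type*) : Ideal (MvPolynomial σ K) :=
  Ideal.span (Set.range X)

def pointIdeal {K : Type*} [Field K] {n : ℕ} (v : Fin n → K) : Ideal (MvPolynomial (Fin n) K) :=
  Ideal.span { f | ∃ i j : Fin n, f = C (v j) * X i - C (v i) * X j }

def pointsIdeal {K : Type*} [Field K] {s N : ℕ} (a : Fin s → Fin (N+1) → K) :
    Ideal (MvPolynomial (Fin (N+1)) K) :=
  ⨅ i : Fin s, pointIdeal (a i)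

def DistinctPoints {K : Type*} [Field K] {s N : ℕ} (a : Fin s → Fin (N+1) → K) : Prop :=
  (∀ i, a i ≠ 0) ∧ ∀ i j : Fin s, i ≠ j → ∀ c : K, a j ≠ c • a i

def HoldsForGeneralPoints (𝕜 : Type*) [Field 𝕜] (N s : ℕ)
    (P : Ideal (MvPolynomial (Fin (N+1)) 𝕜) → Prop) : Prop :=
  ∃ g : MvPolynomial (Fin s × Fin (N+1)) 𝕜, g ≠ 0 ∧
    ∀ a : Fin s → Fin (N+1) → 𝕜, eval (fun p => a p.1 p.2) g ≠ 0 →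
      DistinctPoints a ∧ P (pointsIdeal a)

abbrev CoordField (𝕜 : Type*) [Field 𝕜] (N s : ℕ) : Type _ :=
  FractionRing (MvPolynomial (Fin s × Fin (N+1)) 𝕜)

def genericPointsIdeal (𝕜 : Type*) [Field 𝕜] (N s : ℕ) :
    Ideal (MvPolynomial (Fin (N+1)) (CoordField 𝕜 N s)) :=
  ⨅ i : Fin s, pointIdeal (fun j =>
    algebraMap (MvPolynomial (Fin s × Fin (N+1)) 𝕜) (CoordField 𝕜 N s) (X (i, j)))

def waldschmidt {K : Type*} [CommRing K] {σ : Type*} (I : Ideal (MvPolynomial σ K)) : ℝ :=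
  ⨅ m : ℕ+, (alphaDeg (symbolicPower I (m : ℕ)) : ℝ) / ((m : ℕ) : ℝ)

def resurgence {R : Type*} [CommRing R] (I : Ideal R) : ℝ :=
  sSup {x : ℝ | ∃ a b : ℕ, 0 < a ∧ 0 < b ∧ ¬ symbolicPower I a ≤ I ^ b ∧ x = (a : ℝ) / b}



/-- k-step: from `k^N ≤ C(N(k-1)-1, N)` deduce the same for `k+1`. -/
lemma stmt7_stepK (k N : ℕ) (hk : 2 ≤ k) (hN : 1 ≤ N)
    (h : k ^ N ≤ (N * k - N - 1).choose N) :
    (k + 1) ^ N ≤ (N * (k + 1) - N - 1).choose N := by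
  have hmul : N * (k + 1) = N * k + N := by ring
  have hge : N + 1 ≤ N * k := by nlinarith
  obtain ⟨n, hn⟩ : ∃ n, N * k - N - 1 = n := ⟨_, rfl⟩
  have hnk : n ≤ k * N := by rw [mul_comm]; omega
  have htop : N * (k + 1) - N - 1 = n + N := by omega
  rw [htop]
  rw [hn] at h
  have key : ∀ i ∈ Finset.range N, (k + 1) * (n - i) ≤ k * (n + N - i) := by
    intro i hi
    rcases le_or_gt i n with h2 | h2
    · have e : n + N - i = (n - i) + N := by omega
      have h3 : n - i ≤ k * N := le_trans (Nat.sub_le _ _) hnk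
      rw [e]
      calc (k + 1) * (n - i) = k * (n - i) + (n - i) := by ring
        _ ≤ k * (n - i) + k * N := Nat.add_le_add_left h3 _
        _ = k * ((n - i) + N) := by ring
    · rw [Nat.sub_eq_zero_of_le (le_of_lt h2), Nat.mul_zero]
      exact Nat.zero_le _
  have e1 : (k + 1) ^ N * n.descFactorial N = ∏ i ∈ Finset.range N, (k + 1) * (n - i) := by
    rw [Finset.prod_mul_distrib, Finset.prod_const, Finset.card_range,
      Nat.descFactorial_eq_prod_range]
  have e2 : k ^ N * (n + N).descFactorial N = ∏ i ∈ Finset.range N, k * (n + N - i) := by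
    rw [Finset.prod_mul_distrib, Finset.prod_const, Finset.card_range,
      Nat.descFactorial_eq_prod_range]
  have Dle : (k + 1) ^ N * n.descFactorial N ≤ k ^ N * (n + N).descFactorial N := by
    rw [e1, e2]; exact Finset.prod_le_prod' key
  rw [Nat.descFactorial_eq_factorial_mul_choose, Nat.descFactorial_eq_factorial_mul_choose] at Dle
  have hpos : 0 < k ^ N * N.factorial :=
    Nat.mul_pos (pow_pos (by omega) _) N.factorial_pos
  refine Nat.le_of_mul_le_mul_left ?_ hpos
  calc k ^ N * N.factorial * (k + 1) ^ N
      = (k + 1) ^ N * (N.factorial * k ^ N) := by ring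
    _ ≤ (k + 1) ^ N * (N.factorial * n.choose N) :=
        Nat.mul_le_mul_left _ (Nat.mul_le_mul_left _ h)
    _ ≤ k ^ N * (N.factorial * (n + N).choose N) := Dle
    _ = k ^ N * N.factorial * (n + N).choose N := by ring

/-- N-step for k = 3. -/
lemma stmt7_step3 (N : ℕ) (hN : 1 ≤ N) (h : 3 ^ N ≤ (2 * N - 1).choose N) :
    3 ^ (N + 1) ≤ (2 * (N + 1) - 1).choose (N + 1) := by
  rw [show 2 * (N + 1) - 1 = 2 * N + 1 from by omega]
  have hA : 2 * N * ((2 * N - 1).choose N) = (N + 1) * ((2 * N).choose (N + 1)) := by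
    have := Nat.add_one_mul_choose_eq (2 * N - 1) N
    rw [show 2 * N - 1 + 1 = 2 * N from by omega] at this
    rw [this, Nat.mul_comm]
  have hB : ((2 * N).choose (N + 1)) * (2 * N + 1) = ((2 * N + 1).choose (N + 1)) * N := by
    have := Nat.choose_mul_succ_eq (2 * N) (N + 1)
    rwa [show 2 * N + 1 - (N + 1) = N from by omega] at this
  have key : 2 * N * (2 * N + 1) * ((2 * N - 1).choose N)
      = (N + 1) * N * ((2 * N + 1).choose (N + 1)) := by
    calc 2 * N * (2 * N + 1) * ((2 * N - 1).choose N)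
        = (2 * N * ((2 * N - 1).choose N)) * (2 * N + 1) := by ring
      _ = ((N + 1) * ((2 * N).choose (N + 1))) * (2 * N + 1) := by rw [hA]
      _ = (N + 1) * (((2 * N).choose (N + 1)) * (2 * N + 1)) := by ring
      _ = (N + 1) * (((2 * N + 1).choose (N + 1)) * N) := by rw [hB]
      _ = (N + 1) * N * ((2 * N + 1).choose (N + 1)) := by ring
  have hM : 0 < (N + 1) * N := by positivity
  refine Nat.le_of_mul_le_mul_left ?_ hM
  have hco : 3 * ((N + 1) * N) ≤ 2 * N * (2 * N + 1) := by nlinarith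
  calc (N + 1) * N * 3 ^ (N + 1)
      = (3 * ((N + 1) * N)) * 3 ^ N := by ring
    _ ≤ (2 * N * (2 * N + 1)) * 3 ^ N := Nat.mul_le_mul_right _ hco
    _ ≤ (2 * N * (2 * N + 1)) * ((2 * N - 1).choose N) := Nat.mul_le_mul_left _ h
    _ = 2 * N * (2 * N + 1) * ((2 * N - 1).choose N) := by ring
    _ = (N + 1) * N * ((2 * N + 1).choose (N + 1)) := key

/-- N-step for k = 4. -/
lemma stmt7_step4 (N : ℕ) (hN : 1 ≤ N) (h : 4 ^ N ≤ (3 * N - 1).choose N) :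
    4 ^ (N + 1) ≤ (3 * (N + 1) - 1).choose (N + 1) := by
  rw [show 3 * (N + 1) - 1 = 3 * N + 2 from by omega]
  have hA : 3 * N * ((3 * N - 1).choose N) = (N + 1) * ((3 * N).choose (N + 1)) := by
    have := Nat.add_one_mul_choose_eq (3 * N - 1) N
    rw [show 3 * N - 1 + 1 = 3 * N from by omega] at this
    rw [this, Nat.mul_comm]
  have hB1 : ((3 * N).choose (N + 1)) * (3 * N + 1) = ((3 * N + 1).choose (N + 1)) * (2 * N) := by
    have := Nat.choose_mul_succ_eq (3 * N) (N + 1)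
    rwa [show 3 * N + 1 - (N + 1) = 2 * N from by omega] at this
  have hB2 : ((3 * N + 1).choose (N + 1)) * (3 * N + 2)
      = ((3 * N + 2).choose (N + 1)) * (2 * N + 1) := by
    have := Nat.choose_mul_succ_eq (3 * N + 1) (N + 1)
    rwa [show 3 * N + 1 + 1 - (N + 1) = 2 * N + 1 from by omega,
      show 3 * N + 1 + 1 = 3 * N + 2 from by omega] at this
  have key : 3 * N * (3 * N + 1) * (3 * N + 2) * ((3 * N - 1).choose N)
      = (N + 1) * (2 * N) * (2 * N + 1) * ((3 * N + 2).choose (N + 1)) := by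
    calc 3 * N * (3 * N + 1) * (3 * N + 2) * ((3 * N - 1).choose N)
        = (3 * N * ((3 * N - 1).choose N)) * ((3 * N + 1) * (3 * N + 2)) := by ring
      _ = ((N + 1) * ((3 * N).choose (N + 1))) * ((3 * N + 1) * (3 * N + 2)) := by rw [hA]
      _ = (N + 1) * (((3 * N).choose (N + 1)) * (3 * N + 1)) * (3 * N + 2) := by ring
      _ = (N + 1) * (((3 * N + 1).choose (N + 1)) * (2 * N)) * (3 * N + 2) := by rw [hB1]
      _ = (N + 1) * (2 * N) * (((3 * N + 1).choose (N + 1)) * (3 * N + 2)) := by ring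
      _ = (N + 1) * (2 * N) * (((3 * N + 2).choose (N + 1)) * (2 * N + 1)) := by rw [hB2]
      _ = (N + 1) * (2 * N) * (2 * N + 1) * ((3 * N + 2).choose (N + 1)) := by ring
  have hM : 0 < (N + 1) * (2 * N) * (2 * N + 1) := by positivity
  refine Nat.le_of_mul_le_mul_left ?_ hM
  have hco : 4 * ((N + 1) * (2 * N) * (2 * N + 1)) ≤ 3 * N * (3 * N + 1) * (3 * N + 2) := by
    nlinarith [sq_nonneg N, hN]
  calc (N + 1) * (2 * N) * (2 * N + 1) * 4 ^ (N + 1)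
      = (4 * ((N + 1) * (2 * N) * (2 * N + 1))) * 4 ^ N := by ring
    _ ≤ (3 * N * (3 * N + 1) * (3 * N + 2)) * 4 ^ N := Nat.mul_le_mul_right _ hco
    _ ≤ (3 * N * (3 * N + 1) * (3 * N + 2)) * ((3 * N - 1).choose N) := Nat.mul_le_mul_left _ h
    _ = (N + 1) * (2 * N) * (2 * N + 1) * ((3 * N + 2).choose (N + 1)) := key

/-- N-step for k = 5. -/
lemma stmt7_step5 (N : ℕ) (hN : 1 ≤ N) (h : 5 ^ N ≤ (4 * N - 1).choose N) :
    5 ^ (N + 1) ≤ (4 * (N + 1) - 1).choose (N + 1) := by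
  rw [show 4 * (N + 1) - 1 = 4 * N + 3 from by omega]
  have hA : 4 * N * ((4 * N - 1).choose N) = (N + 1) * ((4 * N).choose (N + 1)) := by
    have := Nat.add_one_mul_choose_eq (4 * N - 1) N
    rw [show 4 * N - 1 + 1 = 4 * N from by omega] at this
    rw [this, Nat.mul_comm]
  have hB1 : ((4 * N).choose (N + 1)) * (4 * N + 1) = ((4 * N + 1).choose (N + 1)) * (3 * N) := by
    have := Nat.choose_mul_succ_eq (4 * N) (N + 1)
    rwa [show 4 * N + 1 - (N + 1) = 3 * N from by omega] at this
  have hB2 : ((4 * N + 1).choose (N + 1)) * (4 * N + 2)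
      = ((4 * N + 2).choose (N + 1)) * (3 * N + 1) := by
    have := Nat.choose_mul_succ_eq (4 * N + 1) (N + 1)
    rwa [show 4 * N + 1 + 1 - (N + 1) = 3 * N + 1 from by omega,
      show 4 * N + 1 + 1 = 4 * N + 2 from by omega] at this
  have hB3 : ((4 * N + 2).choose (N + 1)) * (4 * N + 3)
      = ((4 * N + 3).choose (N + 1)) * (3 * N + 2) := by
    have := Nat.choose_mul_succ_eq (4 * N + 2) (N + 1)
    rwa [show 4 * N + 2 + 1 - (N + 1) = 3 * N + 2 from by omega,
      show 4 * N + 2 + 1 = 4 * N + 3 from by omega] at this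
  have key : 4 * N * (4 * N + 1) * (4 * N + 2) * (4 * N + 3) * ((4 * N - 1).choose N)
      = (N + 1) * (3 * N) * (3 * N + 1) * (3 * N + 2) * ((4 * N + 3).choose (N + 1)) := by
    calc 4 * N * (4 * N + 1) * (4 * N + 2) * (4 * N + 3) * ((4 * N - 1).choose N)
        = (4 * N * ((4 * N - 1).choose N)) * ((4 * N + 1) * (4 * N + 2) * (4 * N + 3)) := by ring
      _ = ((N + 1) * ((4 * N).choose (N + 1))) * ((4 * N + 1) * (4 * N + 2) * (4 * N + 3)) := by
          rw [hA]
      _ = (N + 1) * (((4 * N).choose (N + 1)) * (4 * N + 1)) * ((4 * N + 2) * (4 * N + 3)) := by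
          ring
      _ = (N + 1) * (((4 * N + 1).choose (N + 1)) * (3 * N)) * ((4 * N + 2) * (4 * N + 3)) := by
          rw [hB1]
      _ = (N + 1) * (3 * N) * (((4 * N + 1).choose (N + 1)) * (4 * N + 2)) * (4 * N + 3) := by
          ring
      _ = (N + 1) * (3 * N) * (((4 * N + 2).choose (N + 1)) * (3 * N + 1)) * (4 * N + 3) := by
          rw [hB2]
      _ = (N + 1) * (3 * N) * (3 * N + 1) * (((4 * N + 2).choose (N + 1)) * (4 * N + 3)) := by
          ring
      _ = (N + 1) * (3 * N) * (3 * N + 1) * (((4 * N + 3).choose (N + 1)) * (3 * N + 2)) := by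
          rw [hB3]
      _ = (N + 1) * (3 * N) * (3 * N + 1) * (3 * N + 2) * ((4 * N + 3).choose (N + 1)) := by
          ring
  have hM : 0 < (N + 1) * (3 * N) * (3 * N + 1) * (3 * N + 2) := by positivity
  refine Nat.le_of_mul_le_mul_left ?_ hM
  have hco : 5 * ((N + 1) * (3 * N) * (3 * N + 1) * (3 * N + 2))
      ≤ 4 * N * (4 * N + 1) * (4 * N + 2) * (4 * N + 3) := by
    nlinarith [sq_nonneg N, hN, Nat.one_le_iff_ne_zero.mp hN]
  calc (N + 1) * (3 * N) * (3 * N + 1) * (3 * N + 2) * 5 ^ (N + 1)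
      = (5 * ((N + 1) * (3 * N) * (3 * N + 1) * (3 * N + 2))) * 5 ^ N := by ring
    _ ≤ (4 * N * (4 * N + 1) * (4 * N + 2) * (4 * N + 3)) * 5 ^ N :=
        Nat.mul_le_mul_right _ hco
    _ ≤ (4 * N * (4 * N + 1) * (4 * N + 2) * (4 * N + 3)) * ((4 * N - 1).choose N) :=
        Nat.mul_le_mul_left _ h
    _ = (N + 1) * (3 * N) * (3 * N + 1) * (3 * N + 2) * ((4 * N + 3).choose (N + 1)) := key

lemma stmt7_kind (N : ℕ) (hN : 1 ≤ N) (k0 : ℕ) (hk0 : 2 ≤ k0)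
    (hbase : k0 ^ N ≤ (N * k0 - N - 1).choose N) :
    ∀ k, k0 ≤ k → k ^ N ≤ (N * k - N - 1).choose N := by
  intro k hk
  induction k, hk using Nat.le_induction with
  | base => exact hbase
  | succ m hm ih => exact stmt7_stepK m N (hk0.trans hm) hN ih

/-- Lemma 4.4: `k^N ≤ C(Nk - N - 1, N)` in the three listed cases. -/
theorem stmt7 (k N : ℕ)
    (hcase : (5 ≤ k ∧ 3 ≤ N) ∨ (4 ≤ k ∧ 4 ≤ N) ∨ (3 ≤ k ∧ 9 ≤ N)) :
    k ^ N ≤ (N * k - N - 1).choose N := by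
  rcases hcase with ⟨hk, hN⟩ | ⟨hk, hN⟩ | ⟨hk, hN⟩
  · refine stmt7_kind N (by omega) 5 (by omega) ?_ k hk
    rw [show N * 5 - N - 1 = 4 * N - 1 from by omega]
    induction N, hN using Nat.le_induction with
    | base => decide
    | succ m hm ih => exact stmt7_step5 m (by omega) ih
  · refine stmt7_kind N (by omega) 4 (by omega) ?_ k hk
    rw [show N * 4 - N - 1 = 3 * N - 1 from by omega]
    induction N, hN using Nat.le_induction with
    | base => decide
    | succ m hm ih => exact stmt7_step4 m (by omega) ih
  · refine stmt7_kind N (by omega) 3 (by omega) ?_ k hk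
    rw [show N * 3 - N - 1 = 2 * N - 1 from by omega]
    induction N, hN using Nat.le_induction with
    | base => decide
    | succ m hm ih => exact stmt7_step3 m (by omega) ih

end
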